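/- arXiv:1611.08183 — 4 statements merged into one kernel-verified Lean document; each statement's English description precedes it below -/
import Mathlib

section
/- Let K ≥ 0 and let g : ℝ³ → [0,∞) be a measurable function with g(v) ≤ K for almost every v ∈ ℝ³, and let 0 ≤ α < β with ∫_{ℝ³} |v|^β g(v) dv < ∞. Then ∫_{ℝ³} |v|^α g(v) dv ≤ ((4/3)·π·K + 1) · (∫_{ℝ³} |v|^β g(v) dv)^{(α+3)/(β+3)}. -/
open MeasureTheory Real
open scoped ENNReal RealInnerProductSpace

noncomputable section

/-- The flat 3-torus `(ℝ/ℤ)³` with its Haar (Lebesgue) probability measure. -/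
abbrev T3 : Type := Fin 3 → AddCircle (1 : ℝ)

/-- Euclidean 3-space with Lebesgue measure. -/
abbrev R3 : Type := EuclideanSpace ℝ (Fin 3)

theorem vol_ball3 (R : ℝ) (hR : 0 ≤ R) :
    (volume (Metric.ball (0 : R3) R)) = ENNReal.ofReal (4/3 * π * R^3) := by
  rw [EuclideanSpace.volume_ball]
  have h52 : Real.Gamma ((Fintype.card (Fin 3) : ℝ) / 2 + 1) = 3/4 * Real.sqrt π := by
    simp only [Fintype.card_fin]
    rw [show ((3:ℕ):ℝ)/2 + 1 = (1/2 + 1) + 1 by push_cast; ring, Real.Gamma_add_one (by positivity),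
      Real.Gamma_add_one (by norm_num), Real.Gamma_one_half_eq]
    ring
  rw [h52]
  have hsq : Real.sqrt π > 0 := Real.sqrt_pos.mpr pi_pos
  have : Real.sqrt π ^ Fintype.card (Fin 3) / (3/4 * Real.sqrt π) = 4/3 * π := by
    simp only [Fintype.card_fin]
    rw [show Real.sqrt π ^ 3 = π * Real.sqrt π by rw [pow_succ, sq_sqrt pi_pos.le]]
    field_simp
  rw [this, ← ENNReal.ofReal_pow hR, ← ENNReal.ofReal_mul (by positivity)]
  simp only [Fintype.card_fin]
  ring_nf

/-- Moment interpolation (Lemma A.1 / `mom.p2`): if `0 ≤ g ≤ K` a.e. on ℝ³ and the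
β-th moment is finite, then for `0 ≤ α < β`,
`∫ |v|^α g ≤ ((4/3)πK + 1) (∫ |v|^β g)^((α+3)/(β+3))`. -/
theorem moment_interpolation (K α β : ℝ) (hK : 0 ≤ K) (g : R3 → ℝ)
    (hg_meas : Measurable g)
    (hg_nonneg : ∀ᵐ v ∂(volume : Measure R3), 0 ≤ g v)
    (hg_bdd : ∀ᵐ v ∂(volume : Measure R3), g v ≤ K)
    (hα : 0 ≤ α) (hαβ : α < β)
    (hfin : (∫⁻ v : R3, ENNReal.ofReal (‖v‖ ^ β * g v)) ≠ ⊤) :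
    (∫⁻ v : R3, ENNReal.ofReal (‖v‖ ^ α * g v))
      ≤ ENNReal.ofReal ((4 / 3) * π * K + 1) *
        (∫⁻ v : R3, ENNReal.ofReal (‖v‖ ^ β * g v)) ^ ((α + 3) / (β + 3)) := by

  have hβ3 : (0:ℝ) < β + 3 := by linarith
  have hmeasβ : Measurable fun v : R3 => ENNReal.ofReal (‖v‖ ^ β * g v) :=
    by fun_prop
  set M := ∫⁻ v : R3, ENNReal.ofReal (‖v‖ ^ β * g v) with hM
  by_cases hM0 : M = 0
  · -- zero case
    have hz : ∀ᵐ v : R3, ENNReal.ofReal (‖v‖ ^ β * g v) = 0 :=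
      (lintegral_eq_zero_iff hmeasβ).mp hM0
    have h0 : ∀ᵐ v : R3, v ≠ 0 := by
      rw [ae_iff]
      simpa using measure_singleton (0 : R3)
    have hz' : ∀ᵐ v : R3, ENNReal.ofReal (‖v‖ ^ α * g v) = 0 := by
      filter_upwards [hz, hg_nonneg, h0] with v h1 h2 h3
      have hnv : 0 < ‖v‖ := norm_pos_iff.mpr h3
      have hβpos : 0 < ‖v‖ ^ β := Real.rpow_pos_of_pos hnv β
      have : ‖v‖ ^ β * g v ≤ 0 := by
        by_contra hc
        push_neg at hc
        simp [ENNReal.ofReal_eq_zero, not_lt.mpr hc.le] at h1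
        linarith
      have hg0 : g v = 0 := le_antisymm (nonpos_of_mul_nonpos_right ?_ hβpos) h2
      · simp [hg0]
      · linarith [mul_comm (‖v‖ ^ β) (g v)]
    rw [lintegral_congr_ae hz']
    simp
  · -- main case
    set m := M.toReal with hm
    have hm0 : 0 < m := ENNReal.toReal_pos hM0 hfin
    set R := m ^ ((1:ℝ)/(β+3)) with hRdef
    have hR0 : 0 < R := Real.rpow_pos_of_pos hm0 _
    set S := Metric.ball (0:R3) R with hSdef
    have hS : MeasurableSet S := measurableSet_ball
    have hsplit : (∫⁻ v : R3, ENNReal.ofReal (‖v‖ ^ α * g v))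
        = (∫⁻ v in S, ENNReal.ofReal (‖v‖ ^ α * g v))
          + ∫⁻ v in Sᶜ, ENNReal.ofReal (‖v‖ ^ α * g v) :=
      (lintegral_add_compl _ hS).symm
    -- bound on the ball
    have hb1 : (∫⁻ v in S, ENNReal.ofReal (‖v‖ ^ α * g v))
        ≤ ENNReal.ofReal (4/3 * π * K * R ^ (α + 3)) := by
      calc (∫⁻ v in S, ENNReal.ofReal (‖v‖ ^ α * g v))
          ≤ ∫⁻ _ in S, ENNReal.ofReal (R ^ α * K) := by
            refine lintegral_mono_ae ?_
            filter_upwards [ae_restrict_of_ae hg_nonneg, ae_restrict_of_ae hg_bdd,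
              ae_restrict_mem hS] with v h1 h2 hv
            refine ENNReal.ofReal_le_ofReal ?_
            have hnv : ‖v‖ < R := by simpa [hSdef, mem_ball_zero_iff] using hv
            exact mul_le_mul (Real.rpow_le_rpow (norm_nonneg v) hnv.le hα) h2 h1
              (Real.rpow_nonneg hR0.le α)
        _ = ENNReal.ofReal (R ^ α * K) * volume S := setLIntegral_const _ _
        _ = ENNReal.ofReal (4/3 * π * K * R ^ (α + 3)) := by
            rw [hSdef, vol_ball3 R hR0.le, ← ENNReal.ofReal_mul (by positivity)]
            congr 1
            rw [show (R:ℝ)^(3:ℕ) = R ^ ((3:ℝ)) by rw [← Real.rpow_natCast R 3]; norm_num,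
              Real.rpow_add hR0]
            ring
    -- bound outside the ball
    have hb2 : (∫⁻ v in Sᶜ, ENNReal.ofReal (‖v‖ ^ α * g v))
        ≤ ENNReal.ofReal (R ^ (α - β)) * M := by
      calc (∫⁻ v in Sᶜ, ENNReal.ofReal (‖v‖ ^ α * g v))
          ≤ ∫⁻ v in Sᶜ, ENNReal.ofReal (R ^ (α - β)) * ENNReal.ofReal (‖v‖ ^ β * g v) := by
            refine lintegral_mono_ae ?_
            filter_upwards [ae_restrict_of_ae hg_nonneg, ae_restrict_mem hS.compl] with v h1 hv
            have hnv : R ≤ ‖v‖ := by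
              simp only [hSdef, Set.mem_compl_iff, mem_ball_zero_iff, not_lt] at hv
              exact hv
            have hvp : 0 < ‖v‖ := lt_of_lt_of_le hR0 hnv
            rw [← ENNReal.ofReal_mul (Real.rpow_nonneg hR0.le _)]
            refine ENNReal.ofReal_le_ofReal ?_
            have key : ‖v‖ ^ α ≤ R ^ (α - β) * ‖v‖ ^ β := by
              have h2 : ‖v‖ ^ α * R ^ (β - α) ≤ ‖v‖ ^ β := by
                have := mul_le_mul_of_nonneg_left
                  (Real.rpow_le_rpow hR0.le hnv (by linarith : (0:ℝ) ≤ β - α))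
                  (Real.rpow_nonneg (norm_nonneg v) α)
                rwa [← Real.rpow_add hvp, show α + (β - α) = β by ring] at this
              have h3 : ‖v‖ ^ α ≤ ‖v‖ ^ β / R ^ (β - α) :=
                (le_div_iff₀ (Real.rpow_pos_of_pos hR0 (β - α))).mpr h2
              calc ‖v‖ ^ α ≤ ‖v‖ ^ β / R ^ (β - α) := h3
                _ = R ^ (α - β) * ‖v‖ ^ β := by
                    rw [div_eq_mul_inv, ← Real.rpow_neg hR0.le, show -(β - α) = α - β by ring]
                    ring
            calc ‖v‖ ^ α * g v ≤ (R ^ (α - β) * ‖v‖ ^ β) * g v :=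
                  mul_le_mul_of_nonneg_right key h1
              _ = R ^ (α - β) * (‖v‖ ^ β * g v) := by ring
        _ = ENNReal.ofReal (R ^ (α - β)) * ∫⁻ v in Sᶜ, ENNReal.ofReal (‖v‖ ^ β * g v) :=
            lintegral_const_mul' _ _ ENNReal.ofReal_ne_top
        _ ≤ ENNReal.ofReal (R ^ (α - β)) * M :=
            mul_le_mul_right (setLIntegral_le_lintegral _ _) _
    -- combine
    have hMof : M = ENNReal.ofReal m := (ENNReal.ofReal_toReal hfin).symm
    set t := m ^ ((α + 3)/(β + 3)) with ht
    have ht1 : R ^ (α + 3) = t := by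
      rw [hRdef, ← Real.rpow_mul hm0.le, ht]
      congr 1
      field_simp
    have ht2 : R ^ (α - β) * m = t := by
      rw [hRdef, ← Real.rpow_mul hm0.le]
      nth_rewrite 2 [show m = m ^ (1:ℝ) by rw [Real.rpow_one]]
      rw [← Real.rpow_add hm0, ht]
      congr 1
      field_simp
      ring
    have hMp : M ^ ((α + 3)/(β + 3)) = ENNReal.ofReal t := by
      rw [hMof, ENNReal.ofReal_rpow_of_pos hm0, ht]
    calc (∫⁻ v : R3, ENNReal.ofReal (‖v‖ ^ α * g v))
        ≤ ENNReal.ofReal (4/3 * π * K * R ^ (α + 3)) + ENNReal.ofReal (R ^ (α - β)) * M := by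
          rw [hsplit]; exact add_le_add hb1 hb2
      _ = ENNReal.ofReal ((4 / 3) * π * K + 1) * M ^ ((α + 3)/(β + 3)) := by
          rw [hMp, hMof, ← ENNReal.ofReal_mul (Real.rpow_nonneg hR0.le _), ht2, ht1,
            ← ENNReal.ofReal_add (by positivity) (by positivity),
            ← ENNReal.ofReal_mul (by positivity)]
          congr 1
          ring
end
end

section
/- Let 𝕋³ = (ℝ/ℤ)³ be the flat three-dimensional torus with its Haar (Lebesgue) measure of total mass 1. Let K ≥ 0, R > 0, and let f : 𝕋³ × ℝ³ → [0,∞) be measurable with f ≤ K almost everywhere and such that for almost every x ∈ 𝕋³ the function v ↦ f(x,v) vanishes outside the closed ball B(0,R) ⊂ ℝ³. Then ∫_{𝕋³} (m₀f(x))² dx ≤ ((4/3)·π·K·R³)^{1/3} · ((4/3)·π·K + 1)^{5/3} · M₂f. -/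
/-!
Splitting the velocity integral at `‖v‖ = r` and using `f ≤ K` on the ball and
`1 ≤ ‖v‖² / r²` outside it gives, for each `x`, `m₀f ≤ (4/3)πK r³ + m₂f / r²`.
The choice `r³ = m₀f / ((4/3)πK + 1)` turns this into
`(m₀f)^{5/3} ≤ ((4/3)πK + 1)^{5/3} m₂f`, and together with the trivial bound
`m₀f ≤ (4/3)πKR³` this yields `(m₀f)² ≤ ((4/3)πKR³)^{1/3} ((4/3)πK + 1)^{5/3} m₂f`
pointwise in `x`; integrating over the torus gives the claim.
-/

open MeasureTheory Real
open scoped ENNReal RealInnerProductSpace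

noncomputable section

open Metric Set

namespace Real

theorem rpow_five_div_three_le_of_forall_le_mul_cube_add_div_sq {k a b : ℝ} (hk : 0 < k + 1)
    (ha : 0 ≤ a) (hb : 0 ≤ b) (h : ∀ r, 0 < r → a ≤ k * r ^ 3 + b / r ^ 2) :
    a ^ (5 / 3 : ℝ) ≤ (k + 1) ^ (5 / 3 : ℝ) * b := by
  rcases ha.eq_or_lt with rfl | ha
  · rw [zero_rpow (by norm_num)]
    positivity
  set t := a / (k + 1)
  have ht : 0 < t := by positivity
  have hat : a = (k + 1) * t := (mul_div_cancel₀ a hk.ne').symm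
  have hr := h (t ^ (1 / 3 : ℝ)) (by positivity)
  rw [← rpow_natCast, ← rpow_natCast, ← rpow_mul ht.le, ← rpow_mul ht.le] at hr
  norm_num at hr
  have ht_le : t ^ (5 / 3 : ℝ) ≤ b := by
    have : t ≤ b / t ^ (2 / 3 : ℝ) := by linarith
    rw [le_div_iff₀ (by positivity), ← rpow_one_add' ht.le (by norm_num)] at this
    norm_num at this
    exact this
  calc a ^ (5 / 3 : ℝ) = (k + 1) ^ (5 / 3 : ℝ) * t ^ (5 / 3 : ℝ) := by
        rw [hat, mul_rpow hk.le ht.le]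
    _ ≤ (k + 1) ^ (5 / 3 : ℝ) * b := by gcongr

theorem sq_le_of_le_of_forall_le_mul_cube_add_div_sq {k a b A : ℝ} (hk : 0 < k + 1)
    (ha : 0 ≤ a) (hb : 0 ≤ b) (haA : a ≤ A) (h : ∀ r, 0 < r → a ≤ k * r ^ 3 + b / r ^ 2) :
    a ^ 2 ≤ A ^ (1 / 3 : ℝ) * (k + 1) ^ (5 / 3 : ℝ) * b := by
  have hA : 0 ≤ A := ha.trans haA
  calc a ^ 2 = a ^ (1 / 3 : ℝ) * a ^ (5 / 3 : ℝ) := by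
        rw [← rpow_add' ha (by norm_num)]
        norm_num
    _ ≤ A ^ (1 / 3 : ℝ) * ((k + 1) ^ (5 / 3 : ℝ) * b) := by
        gcongr
        exact rpow_five_div_three_le_of_forall_le_mul_cube_add_div_sq hk ha hb h
    _ = A ^ (1 / 3 : ℝ) * (k + 1) ^ (5 / 3 : ℝ) * b := by ring

end Real

theorem integrable_of_norm_le_of_ae_notMem_eq_zero {α E : Type*} [MeasurableSpace α]
    [NormedAddCommGroup E] {μ : Measure α} {f : α → E} {s : Set α} (hs : μ s ≠ ⊤)
    (hf : AEStronglyMeasurable f μ) {M : ℝ} (hM : ∀ᵐ x ∂μ, ‖f x‖ ≤ M)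
    (h0 : ∀ᵐ x ∂μ, x ∉ s → f x = 0) : Integrable f μ :=
  (Measure.integrableOn_of_bounded hs hf (ae_restrict_of_ae hM)).integrable_of_ae_notMem_eq_zero h0

theorem norm_sq_mul_le_sq_mul {E : Type*} [SeminormedAddCommGroup E] {v : E} {y K R : ℝ}
    (hy0 : 0 ≤ y) (hyK : y ≤ K) (hv : v ∉ closedBall 0 R → y = 0) :
    ‖v‖ ^ 2 * y ≤ R ^ 2 * K := by
  by_cases hvR : v ∈ closedBall 0 R
  · have : ‖v‖ ≤ R := mem_closedBall_zero_iff.mp hvR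
    gcongr
  · rw [hv hvR, mul_zero]
    exact mul_nonneg (sq_nonneg R) (hy0.trans hyK)

section VelocityMoments

variable {E : Type*} [NormedAddCommGroup E] [MeasurableSpace E] [ProperSpace E]
  {μ : Measure E} [IsFiniteMeasureOnCompacts μ] {g : E → ℝ} {K R : ℝ}

theorem integrable_of_le_of_eq_zero_off_closedBall (hg : Measurable g) (hg0 : ∀ v, 0 ≤ g v)
    (hgK : ∀ᵐ v ∂μ, g v ≤ K) (hgR : ∀ v ∉ closedBall 0 R, g v = 0) : Integrable g μ := by
  refine integrable_of_norm_le_of_ae_notMem_eq_zero (M := K) measure_closedBall_lt_top.ne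
    hg.aestronglyMeasurable ?_ (ae_of_all _ hgR)
  filter_upwards [hgK] with v hv
  rwa [norm_of_nonneg (hg0 v)]

theorem integrable_norm_sq_mul_of_le_of_eq_zero_off_closedBall [OpensMeasurableSpace E]
    (hg : Measurable g) (hg0 : ∀ v, 0 ≤ g v)
    (hgK : ∀ᵐ v ∂μ, g v ≤ K) (hgR : ∀ v ∉ closedBall 0 R, g v = 0) :
    Integrable (fun v ↦ ‖v‖ ^ 2 * g v) μ := by
  refine integrable_of_norm_le_of_ae_notMem_eq_zero (M := R ^ 2 * K) measure_closedBall_lt_top.ne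
    (by fun_prop) ?_ (ae_of_all _ fun v hv ↦ by rw [hgR v hv, mul_zero])
  filter_upwards [hgK] with v hv
  rw [norm_of_nonneg (by have := hg0 v; positivity)]
  exact norm_sq_mul_le_sq_mul (hg0 v) hv (hgR v)

theorem integral_le_mul_measureReal_closedBall (hg0 : ∀ v, 0 ≤ g v) (hgK : ∀ᵐ v ∂μ, g v ≤ K)
    (hgR : ∀ v ∉ closedBall 0 R, g v = 0) :
    ∫ v, g v ∂μ ≤ K * μ.real (closedBall 0 R) := by
  rw [← setIntegral_eq_integral_of_forall_compl_eq_zero hgR]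
  refine (le_norm_self _).trans
    (norm_setIntegral_le_of_norm_le_const_ae measure_closedBall_lt_top ?_)
  filter_upwards [ae_restrict_of_ae hgK] with v hv
  rwa [norm_of_nonneg (hg0 v)]

theorem integral_le_mul_measureReal_closedBall_add_div_sq [OpensMeasurableSpace E]
    (hg0 : ∀ v, 0 ≤ g v) (hgK : ∀ᵐ v ∂μ, g v ≤ K)
    (hg : Integrable g μ) (hg2 : Integrable (fun v ↦ ‖v‖ ^ 2 * g v) μ) {r : ℝ} (hr : 0 < r) :
    ∫ v, g v ∂μ ≤ K * μ.real (closedBall 0 r) + (∫ v, ‖v‖ ^ 2 * g v ∂μ) / r ^ 2 := by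
  have hle : ∀ᵐ v ∂μ,
      g v ≤ (closedBall 0 r).indicator (fun _ ↦ K) v + ‖v‖ ^ 2 * g v / r ^ 2 := by
    filter_upwards [hgK] with v hv
    have hgv := hg0 v
    by_cases hvr : v ∈ closedBall 0 r
    · rw [indicator_of_mem hvr]
      have : 0 ≤ ‖v‖ ^ 2 * g v / r ^ 2 := by positivity
      linarith
    · have hrv : r < ‖v‖ := by simpa using hvr
      rw [indicator_of_notMem hvr, zero_add, le_div_iff₀ (by positivity), mul_comm]
      gcongr
  have hind : Integrable ((closedBall 0 r).indicator fun _ ↦ K) μ :=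
    (integrable_indicator_iff measurableSet_closedBall).2
      (integrableOn_const measure_closedBall_lt_top.ne)
  calc ∫ v, g v ∂μ
      ≤ ∫ v, (closedBall 0 r).indicator (fun _ ↦ K) v + ‖v‖ ^ 2 * g v / r ^ 2 ∂μ :=
        integral_mono_ae hg (hind.add (hg2.div_const _)) hle
    _ = K * μ.real (closedBall 0 r) + (∫ v, ‖v‖ ^ 2 * g v ∂μ) / r ^ 2 := by
        rw [integral_add hind (hg2.div_const _), integral_div,
          integral_indicator_const _ measurableSet_closedBall, smul_eq_mul, mul_comm]

end VelocityMoments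

theorem integral_sq_integral_le_mul_integral_norm_sq_mul {X E : Type*} [MeasurableSpace X]
    [NormedAddCommGroup E] [MeasurableSpace E] [OpensMeasurableSpace E] [ProperSpace E]
    {μ : Measure X} [IsFiniteMeasure μ] {ν : Measure E} [SFinite ν] [IsFiniteMeasureOnCompacts ν]
    {f : X × E → ℝ} {K R C : ℝ} (hf : Measurable f) (hf0 : ∀ p, 0 ≤ f p)
    (hfK : ∀ᵐ p ∂μ.prod ν, f p ≤ K) (hfR : ∀ᵐ x ∂μ, ∀ v ∉ closedBall 0 R, f (x, v) = 0)
    (hbound : ∀ᵐ x ∂μ, (∫ v, f (x, v) ∂ν) ^ 2 ≤ C * ∫ v, ‖v‖ ^ 2 * f (x, v) ∂ν) :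
    ∫ x, (∫ v, f (x, v) ∂ν) ^ 2 ∂μ ≤ C * ∫ p, ‖p.2‖ ^ 2 * f p ∂μ.prod ν := by
  have hm0 : Integrable (fun x ↦ (∫ v, f (x, v) ∂ν) ^ 2) μ := by
    refine .of_bound (hf.stronglyMeasurable.integral_prod_right'.pow 2).aestronglyMeasurable
      ((K * ν.real (closedBall 0 R)) ^ 2) ?_
    filter_upwards [Measure.ae_ae_of_ae_prod hfK, hfR] with x hxK hxR
    rw [norm_of_nonneg (sq_nonneg _)]
    exact pow_le_pow_left₀ (integral_nonneg fun v ↦ hf0 _)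
      (integral_le_mul_measureReal_closedBall (fun v ↦ hf0 _) hxK hxR) 2
  have hfR' : ∀ᵐ p ∂μ.prod ν, p ∉ univ ×ˢ closedBall 0 R → f p = 0 := by
    filter_upwards [Measure.quasiMeasurePreserving_fst.ae hfR] with p hp hpR
    exact hp p.2 fun hv ↦ hpR ⟨mem_univ _, hv⟩
  have hm2 : Integrable (fun p ↦ ‖p.2‖ ^ 2 * f p) (μ.prod ν) := by
    refine integrable_of_norm_le_of_ae_notMem_eq_zero (s := univ ×ˢ closedBall 0 R)
      (M := R ^ 2 * K) ?_ (by fun_prop) ?_ ?_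
    · rw [Measure.prod_prod]
      exact ENNReal.mul_ne_top (measure_ne_top _ _) measure_closedBall_lt_top.ne
    · filter_upwards [hfK, hfR'] with p hpK hpR
      rw [norm_of_nonneg (by have := hf0 p; positivity)]
      exact norm_sq_mul_le_sq_mul (hf0 p) hpK fun hv ↦ hpR fun h ↦ hv h.2
    · filter_upwards [hfR'] with p hpR hp
      rw [hpR hp, mul_zero]
  calc ∫ x, (∫ v, f (x, v) ∂ν) ^ 2 ∂μ ≤ ∫ x, C * ∫ v, ‖v‖ ^ 2 * f (x, v) ∂ν ∂μ :=
        integral_mono_ae hm0 (hm2.integral_prod_left.const_mul C) hbound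
    _ = C * ∫ p, ‖p.2‖ ^ 2 * f p ∂μ.prod ν := by rw [integral_const_mul, integral_prod _ hm2]

theorem measureReal_closedBall_R3 {r : ℝ} (hr : 0 ≤ r) :
    volume.real (closedBall (0 : R3) r) = 4 / 3 * π * r ^ 3 := by
  rw [measureReal_def, EuclideanSpace.volume_closedBall_fin_three, ENNReal.toReal_mul,
    ENNReal.toReal_pow, ENNReal.toReal_ofReal hr, ENNReal.toReal_ofReal (by positivity)]
  ring

theorem sq_integral_le_of_le_of_eq_zero_off_closedBall {g : R3 → ℝ}
    {K R : ℝ} (hK : 0 ≤ K) (hR : 0 ≤ R) (hg : Measurable g) (hg0 : ∀ v, 0 ≤ g v)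
    (hgK : ∀ᵐ v, g v ≤ K) (hgR : ∀ v ∉ closedBall 0 R, g v = 0) :
    (∫ v, g v) ^ 2 ≤
      (4 / 3 * π * K * R ^ 3) ^ (1 / 3 : ℝ) * (4 / 3 * π * K + 1) ^ (5 / 3 : ℝ) *
        ∫ v, ‖v‖ ^ 2 * g v := by
  have hg1 := integrable_of_le_of_eq_zero_off_closedBall hg hg0 hgK hgR
  have hg2 := integrable_norm_sq_mul_of_le_of_eq_zero_off_closedBall hg hg0 hgK hgR
  refine sq_le_of_le_of_forall_le_mul_cube_add_div_sq (by positivity) (integral_nonneg hg0)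
    (integral_nonneg fun v ↦ by have := hg0 v; positivity) ?_ fun r hr ↦ ?_
  · refine (integral_le_mul_measureReal_closedBall hg0 hgK hgR).trans_eq ?_
    rw [measureReal_closedBall_R3 hR]
    ring
  · refine (integral_le_mul_measureReal_closedBall_add_div_sq hg0 hgK hg1 hg2 hr).trans_eq ?_
    rw [measureReal_closedBall_R3 hr.le]
    ring

/-- If `0 ≤ f ≤ K` a.e. and `f(x,·)` is supported in the ball `B(0,R)` for a.e. x,
then `∫ (m₀f)² dx ≤ ((4/3)πKR³)^{1/3} ((4/3)πK + 1)^{5/3} M₂f`. -/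
theorem m0_sq_integral_bound (K R : ℝ) (hK : 0 ≤ K) (hR : 0 < R) (f : T3 × R3 → ℝ)
    (hf_meas : Measurable f)
    (hf_nonneg : ∀ p, 0 ≤ f p)
    (hf_bdd : ∀ᵐ p ∂(volume : Measure (T3 × R3)), f p ≤ K)
    (hsupp : ∀ᵐ x ∂(volume : Measure T3),
      ∀ v : R3, v ∉ Metric.closedBall (0 : R3) R → f (x, v) = 0) :
    (∫ x : T3, (∫ v : R3, f (x, v)) ^ 2)
      ≤ ((4 / 3) * π * K * R ^ 3) ^ ((1 : ℝ) / 3) *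
          ((4 / 3) * π * K + 1) ^ ((5 : ℝ) / 3) *
          ∫ p : T3 × R3, ‖p.2‖ ^ 2 * f p := by
  rw [Measure.volume_eq_prod] at hf_bdd ⊢
  refine integral_sq_integral_le_mul_integral_norm_sq_mul hf_meas hf_nonneg hf_bdd hsupp ?_
  filter_upwards [Measure.ae_ae_of_ae_prod hf_bdd, hsupp] with x hxK hxR
  exact sq_integral_le_of_le_of_eq_zero_off_closedBall hK hR.le
    (hf_meas.comp measurable_prodMk_left) (fun v ↦ hf_nonneg _) hxK hxR
end
end

section
/- Let 𝕋³ = (ℝ/ℤ)³ be the flat three-dimensional torus with its Haar (Lebesgue) measure of total mass 1. Let K ≥ 0, R > 0, and let f : 𝕋³ × ℝ³ → [0,∞) be measurable with f ≤ K almost everywhere and such that for almost every x ∈ 𝕋³ the function v ↦ f(x,v) vanishes outside the closed ball B(0,R) ⊂ ℝ³. Then ∫_{𝕋³} (m₁f(x))² dx ≤ (π·K·R⁴)^{3/4} · ((4/3)·π·K + 1)^{5/4} · M₂f. -/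
/-! Fix `x` and let `φ = f(x, ·)`, `m₁ = ∫ |v| φ`, `m₂ = ∫ |v|² φ`. As `0 ≤ φ ≤ K` vanishes outside
`B(0, R)`, `m₁ ≤ K ∫_{B(0,R)} |v| = πKR⁴`. Bounding `|v| φ` by `K |v|` inside `B(0, r)` and by
`|v|² φ / r` outside gives `m₁ ≤ πKr⁴ + m₂ / r` for every `r > 0`, and `r = m₂^{1/5}` yields
`m₁ ≤ (πK + 1) m₂^{4/5}`. Hence `m₁² = m₁^{3/4} m₁^{5/4} ≤ (πKR⁴)^{3/4} (πK + 1)^{5/4} m₂`, and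
integrating in `x` gives the theorem. -/

open MeasureTheory Real
open scoped ENNReal RealInnerProductSpace

noncomputable section

open Set Filter Topology Metric

theorem le_mul_rpow_of_forall_le_add_div {g h B p : ℝ} (hp : 0 < p) (hh : 0 ≤ h)
    (H : ∀ r > 0, g ≤ B * r ^ p + h / r) : g ≤ (B + 1) * h ^ (p / (p + 1)) := by
  rcases hh.eq_or_lt with rfl | hh
  · have hlim : Tendsto (fun r : ℝ ↦ B * r ^ p) (𝓝[>] 0) (𝓝 0) :=
      ((continuous_const.mul (continuous_rpow_const hp.le)).tendsto' 0 0
        (by simp [zero_rpow hp.ne'])).mono_left nhdsWithin_le_nhds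
    rw [zero_rpow (by positivity), mul_zero]
    exact ge_of_tendsto hlim (eventually_nhdsWithin_of_forall fun r hr ↦ by simpa using H r hr)
  · -- the radius balancing the two terms
    set r := h ^ (1 / (p + 1))
    have hr : 0 < r := rpow_pos_of_pos hh _
    have hrp : r ^ p = h ^ (p / (p + 1)) := by
      rw [← rpow_mul hh.le]; ring_nf
    have hdiv : h / r = h ^ (p / (p + 1)) := by
      rw [div_eq_iff hr.ne', ← rpow_add hh, ← add_div, div_self (by positivity), rpow_one]
    simpa [hrp, hdiv, add_mul] using H r hr

theorem sq_le_rpow_mul_rpow_mul {g h A C p : ℝ} (hp : 1 ≤ p) (hg : 0 ≤ g) (hh : 0 ≤ h)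
    (hC : 0 ≤ C) (hgA : g ≤ A) (hgC : g ≤ C * h ^ (p / (p + 1))) :
    g ^ 2 ≤ A ^ ((p - 1) / p) * C ^ ((p + 1) / p) * h := by
  have hp0 : 0 < p := by linarith
  have hexp : (p - 1) / p + (p + 1) / p = 2 := by field_simp; ring
  have hsplit : g ^ 2 = g ^ ((p - 1) / p) * g ^ ((p + 1) / p) := by
    rw [← rpow_add' hg (by rw [hexp]; norm_num), hexp, rpow_two]
  have hlow : g ^ ((p - 1) / p) ≤ A ^ ((p - 1) / p) :=
    rpow_le_rpow hg hgA (div_nonneg (by linarith) hp0.le)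
  have hhigh : g ^ ((p + 1) / p) ≤ C ^ ((p + 1) / p) * h :=
    calc g ^ ((p + 1) / p) ≤ (C * h ^ (p / (p + 1))) ^ ((p + 1) / p) :=
          rpow_le_rpow hg hgC (by positivity)
      _ = C ^ ((p + 1) / p) * h := by
          rw [mul_rpow hC (by positivity), ← rpow_mul hh]
          field_simp; simp
  rw [hsplit, mul_assoc]
  exact mul_le_mul hlow hhigh (by positivity) (rpow_nonneg (hg.trans hgA) _)

theorem setIntegral_closedBall_norm {E : Type*} [NormedAddCommGroup E] [InnerProductSpace ℝ E]
    [Nontrivial E] [FiniteDimensional ℝ E] [MeasurableSpace E] [BorelSpace E]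
    (μ : Measure E) [μ.IsAddHaarMeasure] {r : ℝ} (hr : 0 ≤ r) :
    ∫ v in closedBall 0 r, ‖v‖ ∂μ =
      Module.finrank ℝ E / (Module.finrank ℝ E + 1) * μ.real (ball 0 1) *
        r ^ (Module.finrank ℝ E + 1) := by
  set d := Module.finrank ℝ E
  have hd : d - 1 + 1 = d := Nat.sub_add_cancel Module.finrank_pos
  have hradial : ∫ y in Ioi (0 : ℝ), y ^ (d - 1) • (Iic r).indicator id y =
      ∫ y in (0 : ℝ)..r, y ^ d := by
    rw [intervalIntegral.integral_of_le hr, ← integral_indicator measurableSet_Ioc,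
      ← integral_indicator measurableSet_Ioi]
    congr 1 with y
    by_cases h0 : 0 < y <;> by_cases hyr : y ≤ r <;>
      simp [indicator, h0, hyr, ← pow_succ, hd]
  rw [← integral_indicator measurableSet_closedBall]
  have hnorm : (closedBall (0 : E) r).indicator (‖·‖) = fun v ↦ (Iic r).indicator id ‖v‖ := by
    ext v; simp [indicator]
  rw [hnorm, integral_fun_norm_addHaar μ, hradial, integral_pow]
  simp only [nsmul_eq_mul, smul_eq_mul]
  field_simp
  ring

theorem EuclideanSpace.setIntegral_closedBall_norm_fin_three {r : ℝ} (hr : 0 ≤ r) :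
    ∫ v in closedBall (0 : EuclideanSpace ℝ (Fin 3)) r, ‖v‖ = π * r ^ 4 := by
  rw [setIntegral_closedBall_norm volume hr, measureReal_def, EuclideanSpace.volume_ball_fin_three,
    ENNReal.ofReal_one, one_pow, one_mul, ENNReal.toReal_ofReal (by positivity),
    finrank_euclideanSpace_fin]
  norm_num

section Moments

variable {E : Type*} [NormedAddCommGroup E] [MeasurableSpace E] [OpensMeasurableSpace E]
  [ProperSpace E] {μ : Measure E} [IsFiniteMeasureOnCompacts μ] {φ : E → ℝ} {K : ℝ}

theorem integrable_indicator_closedBall_const_mul_norm (c r : ℝ) :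
    Integrable ((closedBall (0 : E) r).indicator fun v ↦ c * ‖v‖) μ :=
  ((continuous_const.mul continuous_norm).continuousOn.integrableOn_compact
    (isCompact_closedBall 0 r)).integrable_indicator measurableSet_closedBall

theorem integral_norm_mul_le_of_support_subset_closedBall {R : ℝ} (hφ0 : ∀ v, 0 ≤ φ v)
    (hφK : ∀ᵐ v ∂μ, φ v ≤ K) (hsupp : ∀ v ∉ closedBall 0 R, φ v = 0) :
    ∫ v, ‖v‖ * φ v ∂μ ≤ K * ∫ v in closedBall 0 R, ‖v‖ ∂μ := by
  rw [← integral_const_mul, ← integral_indicator measurableSet_closedBall]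
  refine integral_mono_of_nonneg (.of_forall fun v ↦ mul_nonneg (norm_nonneg v) (hφ0 v))
    (integrable_indicator_closedBall_const_mul_norm K R) ?_
  filter_upwards [hφK] with v hv
  by_cases hvR : v ∈ closedBall 0 R
  · rw [indicator_of_mem hvR, mul_comm K]
    exact mul_le_mul_of_nonneg_left hv (norm_nonneg v)
  · rw [indicator_of_notMem hvR, hsupp v hvR, mul_zero]

theorem integral_norm_mul_le_add_div {r : ℝ} (hr : 0 < r) (hφ0 : ∀ v, 0 ≤ φ v)
    (hφK : ∀ᵐ v ∂μ, φ v ≤ K) (h2 : Integrable (fun v ↦ ‖v‖ ^ 2 * φ v) μ) :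
    ∫ v, ‖v‖ * φ v ∂μ ≤ K * ∫ v in closedBall 0 r, ‖v‖ ∂μ + (∫ v, ‖v‖ ^ 2 * φ v ∂μ) / r := by
  have hball := integrable_indicator_closedBall_const_mul_norm (μ := μ) K r
  rw [← integral_const_mul, ← integral_indicator measurableSet_closedBall, ← integral_div,
    ← integral_add hball (h2.div_const r)]
  refine integral_mono_of_nonneg (.of_forall fun v ↦ mul_nonneg (norm_nonneg v) (hφ0 v))
    (hball.add (h2.div_const r)) ?_
  filter_upwards [hφK] with v hv
  have hmoment : 0 ≤ ‖v‖ ^ 2 * φ v / r := by have := hφ0 v; positivity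
  by_cases hvr : v ∈ closedBall 0 r
  · rw [indicator_of_mem hvr, mul_comm K]
    nlinarith [mul_le_mul_of_nonneg_left hv (norm_nonneg v)]
  · have hrv : r < ‖v‖ := by simpa using hvr
    rw [indicator_of_notMem hvr, zero_add, le_div_iff₀ hr]
    nlinarith [mul_nonneg (norm_nonneg v) (hφ0 v)]

end Moments

theorem integrable_norm_snd_sq_mul {α E : Type*} [MeasurableSpace α] {μ : Measure α}
    [IsFiniteMeasure μ] [NormedAddCommGroup E] [MeasurableSpace E] [OpensMeasurableSpace E]
    [ProperSpace E] {ν : Measure E} [IsFiniteMeasureOnCompacts ν]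
    {f : α × E → ℝ} {K R : ℝ} (hf : AEStronglyMeasurable f (μ.prod ν)) (hf0 : ∀ p, 0 ≤ f p)
    (hfK : ∀ᵐ p ∂μ.prod ν, f p ≤ K)
    (hsupp : ∀ᵐ x ∂μ, ∀ v ∉ closedBall (0 : E) R, f (x, v) = 0) :
    Integrable (fun p : α × E ↦ ‖p.2‖ ^ 2 * f p) (μ.prod ν) := by
  have hsupp' : ∀ᵐ p ∂μ.prod ν, p.2 ∉ closedBall 0 R → f p = 0 := by
    filter_upwards [Measure.quasiMeasurePreserving_fst.ae hsupp] with p hp using hp p.2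
  have hbox : MeasurableSet ((univ : Set α) ×ˢ closedBall (0 : E) R) :=
    MeasurableSet.univ.prod measurableSet_closedBall
  refine Integrable.mono' (g := (univ ×ˢ closedBall (0 : E) R).indicator fun _ ↦ R ^ 2 * K)
    ((integrable_indicator_iff hbox).2 (integrableOn_const ?_))
    ((measurable_snd.norm.pow_const 2).aestronglyMeasurable.mul hf) ?_
  · rw [Measure.prod_prod]
    exact ENNReal.mul_ne_top (measure_ne_top _ _) (isCompact_closedBall 0 R).measure_ne_top
  · filter_upwards [hfK, hsupp'] with p hpK hpR
    rw [Real.norm_of_nonneg (mul_nonneg (sq_nonneg _) (hf0 p))]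
    by_cases hp : p.2 ∈ closedBall 0 R
    · rw [indicator_of_mem (mk_mem_prod (mem_univ _) hp)]
      exact mul_le_mul (pow_le_pow_left₀ (norm_nonneg _) (mem_closedBall_zero_iff.1 hp) 2) hpK
        (hf0 p) (by positivity)
    · rw [indicator_of_notMem (fun h ↦ hp h.2), hpR hp, mul_zero]

theorem sq_integral_norm_mul_le {K R : ℝ} {φ : R3 → ℝ} (hK : 0 ≤ K) (hR : 0 ≤ R)
    (hφ0 : ∀ v, 0 ≤ φ v) (hφK : ∀ᵐ v, φ v ≤ K) (hsupp : ∀ v ∉ closedBall 0 R, φ v = 0)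
    (h2 : Integrable (fun v ↦ ‖v‖ ^ 2 * φ v)) :
    (∫ v, ‖v‖ * φ v) ^ 2 ≤
      (π * K * R ^ 4) ^ ((3 : ℝ) / 4) * ((4 / 3) * π * K + 1) ^ ((5 : ℝ) / 4) *
        ∫ v, ‖v‖ ^ 2 * φ v := by
  set g := ∫ v, ‖v‖ * φ v
  set h := ∫ v, ‖v‖ ^ 2 * φ v
  have hg : 0 ≤ g := integral_nonneg fun v ↦ mul_nonneg (norm_nonneg v) (hφ0 v)
  have hh : 0 ≤ h := integral_nonneg fun v ↦ mul_nonneg (sq_nonneg _) (hφ0 v)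
  have hgA : g ≤ π * K * R ^ 4 := by
    have := integral_norm_mul_le_of_support_subset_closedBall hφ0 hφK hsupp
    rw [EuclideanSpace.setIntegral_closedBall_norm_fin_three hR] at this
    linarith
  have hgB : g ≤ (π * K + 1) * h ^ ((4 : ℝ) / (4 + 1)) := by
    refine le_mul_rpow_of_forall_le_add_div (by norm_num) hh fun r hr ↦ ?_
    have := integral_norm_mul_le_add_div hr hφ0 hφK h2
    rw [EuclideanSpace.setIntegral_closedBall_norm_fin_three hr.le] at this
    rw [rpow_ofNat]
    linarith
  have hgC : g ≤ ((4 / 3) * π * K + 1) * h ^ ((4 : ℝ) / (4 + 1)) :=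
    hgB.trans (mul_le_mul_of_nonneg_right (by nlinarith [pi_pos]) (by positivity))
  have := sq_le_rpow_mul_rpow_mul (by norm_num) hg hh (by positivity) hgA hgC
  convert this using 3 <;> norm_num

/-- If `0 ≤ f ≤ K` a.e. and `f(x,·)` is supported in the ball `B(0,R)` for a.e. x,
then `∫ (m₁f)² dx ≤ (πKR⁴)^{3/4} ((4/3)πK + 1)^{5/4} M₂f`. -/
theorem m1_sq_integral_bound (K R : ℝ) (hK : 0 ≤ K) (hR : 0 < R) (f : T3 × R3 → ℝ)
    (hf_meas : Measurable f)
    (hf_nonneg : ∀ p, 0 ≤ f p)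
    (hf_bdd : ∀ᵐ p ∂(volume : Measure (T3 × R3)), f p ≤ K)
    (hsupp : ∀ᵐ x ∂(volume : Measure T3),
      ∀ v : R3, v ∉ Metric.closedBall (0 : R3) R → f (x, v) = 0) :
    (∫ x : T3, (∫ v : R3, ‖v‖ * f (x, v)) ^ 2)
      ≤ (π * K * R ^ 4) ^ ((3 : ℝ) / 4) *
          ((4 / 3) * π * K + 1) ^ ((5 : ℝ) / 4) *
          ∫ p : T3 × R3, ‖p.2‖ ^ 2 * f p := by
  set C := (π * K * R ^ 4) ^ ((3 : ℝ) / 4) * ((4 / 3) * π * K + 1) ^ ((5 : ℝ) / 4)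
  rw [Measure.volume_eq_prod] at hf_bdd ⊢
  have hF := integrable_norm_snd_sq_mul hf_meas.aestronglyMeasurable hf_nonneg hf_bdd hsupp
  have hpointwise : ∀ᵐ x, (∫ v : R3, ‖v‖ * f (x, v)) ^ 2 ≤ C * ∫ v : R3, ‖v‖ ^ 2 * f (x, v) := by
    filter_upwards [Measure.ae_ae_of_ae_prod hf_bdd, hsupp, hF.prod_right_ae]
      with x hxK hxR hx2
    exact sq_integral_norm_mul_le hK hR.le (fun v ↦ hf_nonneg _) hxK hxR hx2
  calc _ ≤ ∫ x : T3, C * ∫ v : R3, ‖v‖ ^ 2 * f (x, v) :=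
        integral_mono_of_nonneg (.of_forall fun _ ↦ sq_nonneg _)
          (hF.integral_prod_left.const_mul C) hpointwise
    _ = _ := by rw [integral_const_mul, integral_integral hF]
end
end

section
/- Nonlinear Gronwall (Bihari-type) lemma: let t₀ ∈ ℝ, h > 0, q > 1 and c > 0. Let a, b : [t₀, t₀+h] → [0,∞) be integrable, and let f : [t₀, t₀+h] → [0,∞) be continuous and satisfy f(t) ≤ c + ∫_{t₀}^{t} (a(s) f(s) + b(s) f(s)^q) ds for all t ∈ [t₀, t₀+h]. Assume the smallness condition c^{q−1} · (q−1) · ∫_{t₀}^{t₀+h} b(s) ds < exp((1−q) ∫_{t₀}^{t₀+h} a(s) ds). Then for every t ∈ [t₀, t₀+h], f(t) ≤ [ c^{1−q} · exp((1−q) ∫_{t₀}^{t} a(s) ds) − (q−1) ∫_{t₀}^{t} b(s) · exp((1−q) ∫_{s}^{t} a(r) dr) ds ]^{−1/(q−1)}, the quantity in brackets being strictly positive for all such t. -/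
/-!
The majorant `R t = c + ∫_{t₀}^t (a f + b f^q)` is absolutely continuous, dominates `f`, and
satisfies the Bernoulli inequality `R' ≤ a R + b R^q` almost everywhere. The substitution
`R^{1-q}` linearises it: with `A = ∫_{t₀} a`, the function
`R^{1-q} e^{(q-1)A} + (q-1) ∫_{t₀} b e^{(q-1)A}` has a.e. nonnegative derivative, hence is
nondecreasing by the fundamental theorem of calculus for absolutely continuous functions. This
bounds `R(t)^{1-q}` below by the bracket; the smallness condition makes the bracket positive, and
raising to the power `-1/(q-1)` gives `f ≤ R ≤ bracket^{-1/(q-1)}`.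
-/

open MeasureTheory Real Set Filter Topology

theorem LipschitzOnWith.comp_absolutelyContinuousOnInterval {X Y : Type*} [PseudoMetricSpace X]
    [PseudoMetricSpace Y] {g : X → Y} {f : ℝ → X} {K : NNReal} {s : Set X} {a b : ℝ}
    (hg : LipschitzOnWith K g s) (hf : AbsolutelyContinuousOnInterval f a b)
    (hfs : MapsTo f (uIcc a b) s) : AbsolutelyContinuousOnInterval (g ∘ f) a b := by
  have hbound : Tendsto (fun E : ℕ × (ℕ → ℝ × ℝ) ↦
      K * ∑ i ∈ Finset.range E.1, dist (f (E.2 i).1) (f (E.2 i).2))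
      (AbsolutelyContinuousOnInterval.totalLengthFilter ⊓
        𝓟 (AbsolutelyContinuousOnInterval.disjWithin a b)) (𝓝 0) := by
    simpa only [mul_zero] using Tendsto.const_mul (K : ℝ) (show Tendsto _ _ _ from hf)
  refine squeeze_zero' (Eventually.of_forall fun _ ↦ Finset.sum_nonneg fun _ _ ↦ dist_nonneg)
    ?_ hbound
  filter_upwards [mem_inf_of_right (mem_principal_self _)] with E hE
  rw [Finset.mul_sum]
  exact Finset.sum_le_sum fun i hi ↦
    hg.dist_le_mul _ (hfs (hE.1 i hi).1) _ (hfs (hE.1 i hi).2)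

theorem AbsolutelyContinuousOnInterval.comp_contDiffOn {f ψ : ℝ → ℝ} {s : Set ℝ} {a b : ℝ}
    (hf : AbsolutelyContinuousOnInterval f a b) (hψ : ContDiffOn ℝ 1 ψ s) (hs : Convex ℝ s)
    (hfs : MapsTo f (uIcc a b) s) : AbsolutelyContinuousOnInterval (fun x ↦ ψ (f x)) a b := by
  obtain ⟨K, hK⟩ := ((hψ.locallyLipschitzOn hs).mono hfs.image_subset)
    |>.exists_lipschitzOnWith_of_compact (isCompact_uIcc.image_of_continuousOn hf.continuousOn)
  exact hK.comp_absolutelyContinuousOnInterval hf (mapsTo_image f _)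

theorem AbsolutelyContinuousOnInterval.const_add {f : ℝ → ℝ} {a b : ℝ} (c : ℝ)
    (hf : AbsolutelyContinuousOnInterval f a b) :
    AbsolutelyContinuousOnInterval (fun x ↦ c + f x) a b :=
  (LipschitzWith.const c).lipschitzOnWith.absolutelyContinuousOnInterval.fun_add hf

theorem AbsolutelyContinuousOnInterval.le_of_ae_deriv_nonneg {f : ℝ → ℝ} {a b : ℝ}
    (hab : a ≤ b) (hf : AbsolutelyContinuousOnInterval f a b)
    (hf' : ∀ᵐ x, x ∈ Icc a b → 0 ≤ deriv f x) : f a ≤ f b := by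
  have h_ftc := hf.integral_deriv_eq_sub
  have h_nonneg : 0 ≤ ∫ x in a..b, deriv f x :=
    intervalIntegral.integral_nonneg_of_ae_restrict hab ((ae_restrict_iff' measurableSet_Icc).2 hf')
  linarith

/-- While positive, `bihariBound a b q c t₀ t ^ (-1 / (q - 1))` is the solution of the Bernoulli
equation `u' = a u + b u ^ q`, `u t₀ = c`. -/
noncomputable def bihariBound (a b : ℝ → ℝ) (q c t₀ t : ℝ) : ℝ :=
  c ^ (1 - q) * exp ((1 - q) * ∫ s in t₀..t, a s)
    - (q - 1) * ∫ s in t₀..t, b s * exp ((1 - q) * ∫ r in s..t, a r)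

theorem bihariBound_pos {a b : ℝ → ℝ} {t₀ T t q c : ℝ} (hq : 1 ≤ q) (hc : 0 < c)
    (ht : t ∈ Icc t₀ T) (ha : ∀ s ∈ Icc t₀ T, 0 ≤ a s) (hb : ∀ s ∈ Icc t₀ T, 0 ≤ b s)
    (ha_int : IntervalIntegrable a volume t₀ T) (hb_int : IntervalIntegrable b volume t₀ T)
    (hsmall : c ^ (q - 1) * (q - 1) * (∫ s in t₀..T, b s) < exp ((1 - q) * ∫ s in t₀..T, a s)) :
    0 < bihariBound a b q c t₀ t := by
  have hsub : uIcc t₀ t ⊆ uIcc t₀ T :=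
    uIcc_subset_uIcc_left (by rwa [uIcc_of_le (ht.1.trans ht.2)])
  have hA : ∫ s in t₀..t, a s ≤ ∫ s in t₀..T, a s :=
    intervalIntegral.integral_mono_interval le_rfl ht.1 ht.2
      (ae_restrict_of_forall_mem measurableSet_Ioc fun s hs ↦ ha s ⟨hs.1.le, hs.2⟩) ha_int
  have hB : ∫ s in t₀..t, b s * exp ((1 - q) * ∫ r in s..t, a r) ≤ ∫ s in t₀..T, b s := by
    calc ∫ s in t₀..t, b s * exp ((1 - q) * ∫ r in s..t, a r)
        ≤ ∫ s in t₀..t, b s := by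
          refine intervalIntegral.integral_mono_on ht.1 ?_ (hb_int.mono_set hsub) fun s hs ↦ ?_
          · exact (hb_int.mono_set hsub).mul_continuousOn
              (continuousOn_const.mul (intervalIntegral.continuousOn_primitive_interval_left
                ((intervalIntegrable_iff' enorm_ne_top).1 (ha_int.mono_set hsub)))).rexp
          · have h_int : 0 ≤ ∫ r in s..t, a r := intervalIntegral.integral_nonneg hs.2
              fun r hr ↦ ha r ⟨hs.1.trans hr.1, hr.2.trans ht.2⟩
            exact mul_le_of_le_one_right (hb s ⟨hs.1, hs.2.trans ht.2⟩)
              (exp_le_one_iff.2 (mul_nonpos_of_nonpos_of_nonneg (by linarith) h_int))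
      _ ≤ ∫ s in t₀..T, b s :=
          intervalIntegral.integral_mono_interval le_rfl ht.1 ht.2
            (ae_restrict_of_forall_mem measurableSet_Ioc fun s hs ↦ hb s ⟨hs.1.le, hs.2⟩) hb_int
  have hexp : exp ((1 - q) * ∫ s in t₀..T, a s) ≤ exp ((1 - q) * ∫ s in t₀..t, a s) :=
    exp_le_exp.2 (mul_le_mul_of_nonpos_left hA (by linarith))
  have hcc : c ^ (1 - q) * c ^ (q - 1) = 1 := by
    rw [← rpow_add hc]; simp
  have h_small := mul_lt_mul_of_pos_left hsmall (rpow_pos_of_pos hc (1 - q))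
  rw [← mul_assoc, ← mul_assoc, hcc, one_mul] at h_small
  unfold bihariBound
  linarith [mul_le_mul_of_nonneg_left hB (by linarith : (0 : ℝ) ≤ q - 1),
    mul_le_mul_of_nonneg_left hexp (rpow_pos_of_pos hc (1 - q)).le]

theorem integral_mul_exp_integral_eq {a b : ℝ → ℝ} {t₀ t k : ℝ}
    (ha : IntervalIntegrable a volume t₀ t) :
    ∫ s in t₀..t, b s * exp (k * ∫ r in s..t, a r)
      = exp (k * ∫ s in t₀..t, a s) * ∫ s in t₀..t, b s * exp (-k * ∫ r in t₀..s, a r) := by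
  rw [← intervalIntegral.integral_const_mul]
  refine intervalIntegral.integral_congr fun s hs ↦ ?_
  rw [← intervalIntegral.integral_interval_sub_left ha
    (ha.mono_set (uIcc_subset_uIcc left_mem_uIcc hs)), mul_left_comm, ← exp_add]
  ring_nf

/-- The derivative of `R ^ (1 - q) * E + (q - 1) * ∫ b E` where `E = exp ((q - 1) * A)`,
`A' = a`, at a point where `R = r`, `R' = r'`; it equals `(q - 1) E r^{-q} (a r + b r^q - r')`. -/
theorem bihari_lyapunov_deriv_nonneg {r r' a b E q : ℝ} (hq : 1 ≤ q) (hr : 0 < r) (hE : 0 ≤ E)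
    (h : r' ≤ a * r + b * r ^ q) :
    0 ≤ r' * (1 - q) * r ^ (1 - q - 1) * E + r ^ (1 - q) * (E * ((q - 1) * a))
      + (q - 1) * (b * E) := by
  have h_pow : r ^ (1 - q - 1) = r ^ (-q) := by ring_nf
  have h_pow' : r ^ (1 - q) = r ^ (-q) * r := by
    rw [← rpow_add_one hr.ne']; ring_nf
  have h_one : r ^ (-q) * r ^ q = 1 := by
    rw [← rpow_add hr]; simp
  have h_factor : 0 ≤ (q - 1) * E * r ^ (-q) * (a * r + b * r ^ q - r') := by
    have := rpow_nonneg hr.le (-q)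
    have := sub_nonneg.2 h
    have : 0 ≤ q - 1 := by linarith
    positivity
  rw [h_pow, h_pow']
  linear_combination h_factor + (q - 1) * b * E * h_one

theorem AbsolutelyContinuousOnInterval.bihariBound_le_rpow {R a b : ℝ → ℝ} {t₀ t q : ℝ}
    (hq : 1 ≤ q) (ht : t₀ ≤ t)
    (hR : AbsolutelyContinuousOnInterval R t₀ t) (hR_pos : ∀ x ∈ Icc t₀ t, 0 < R x)
    (ha : IntervalIntegrable a volume t₀ t) (hb : IntervalIntegrable b volume t₀ t)
    (hR' : ∀ᵐ x, x ∈ Icc t₀ t → deriv R x ≤ a x * R x + b x * R x ^ q) :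
    bihariBound a b q (R t₀) t₀ t ≤ R t ^ (1 - q) := by
  have ht₀ : t₀ ∈ uIcc t₀ t := left_mem_uIcc
  have hE_ac : AbsolutelyContinuousOnInterval
      (fun x ↦ exp ((q - 1) * ∫ s in t₀..x, a s)) t₀ t :=
    ((ha.absolutelyContinuousOnInterval_intervalIntegral ht₀).const_mul (q - 1)).comp_contDiffOn
      contDiff_exp.contDiffOn convex_univ (mapsTo_univ _ _)
  have hbE : IntervalIntegrable (fun s ↦ b s * exp ((q - 1) * ∫ r in t₀..s, a r)) volume t₀ t :=
    hb.mul_continuousOn hE_ac.continuousOn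
  have hRq_ac : AbsolutelyContinuousOnInterval (fun x ↦ R x ^ (1 - q)) t₀ t :=
    hR.comp_contDiffOn (ψ := fun y ↦ y ^ (1 - q))
      (fun y hy ↦ (contDiffAt_rpow_const_of_ne (ne_of_gt hy)).contDiffWithinAt)
      (convex_Ioi 0) (fun x hx ↦ hR_pos x (by rwa [uIcc_of_le ht] at hx))
  have hV_ac : AbsolutelyContinuousOnInterval
      (fun x ↦ R x ^ (1 - q) * exp ((q - 1) * ∫ s in t₀..x, a s)
        + (q - 1) * ∫ s in t₀..x, b s * exp ((q - 1) * ∫ r in t₀..s, a r)) t₀ t :=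
    (hRq_ac.fun_mul hE_ac).fun_add
      ((hbE.absolutelyContinuousOnInterval_intervalIntegral ht₀).const_mul _)
  have hV_mono := hV_ac.le_of_ae_deriv_nonneg ht ?_
  · simp only [intervalIntegral.integral_same, mul_zero, exp_zero, mul_one, add_zero] at hV_mono
    have h_shift := integral_mul_exp_integral_eq (b := b) (k := 1 - q) ha
    rw [neg_sub] at h_shift
    have h_cancel :
        exp ((1 - q) * ∫ s in t₀..t, a s) * exp ((q - 1) * ∫ s in t₀..t, a s) = 1 := by
      rw [← exp_add]; ring_nf; exact exp_zero
    rw [bihariBound, h_shift]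
    linear_combination exp ((1 - q) * ∫ s in t₀..t, a s) * hV_mono + R t ^ (1 - q) * h_cancel
  filter_upwards [hR.ae_differentiableAt, ha.ae_hasDerivAt_integral, hbE.ae_hasDerivAt_integral,
    hR'] with x hRx hAx hBx hR'x hx
  have hx' : x ∈ uIcc t₀ t := by rwa [uIcc_of_le ht]
  rw [((((hRx hx').hasDerivAt.rpow_const (p := 1 - q) (Or.inl (hR_pos x hx).ne')).fun_mul
    (((hAx hx' t₀ ht₀).const_mul (q - 1)).exp)).fun_add
    ((hBx hx' t₀ ht₀).const_mul (q - 1))).deriv]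
  exact bihari_lyapunov_deriv_nonneg hq (hR_pos x hx) (exp_pos _).le (hR'x hx)

theorem bihariBound_le_rpow_of_le_integral {a b f : ℝ → ℝ} {t₀ t q c : ℝ} (hq : 1 ≤ q)
    (hc : 0 < c) (ht : t₀ ≤ t) (ha : ∀ s ∈ Icc t₀ t, 0 ≤ a s) (hb : ∀ s ∈ Icc t₀ t, 0 ≤ b s)
    (ha_int : IntegrableOn a (Icc t₀ t)) (hb_int : IntegrableOn b (Icc t₀ t))
    (hf_cont : ContinuousOn f (Icc t₀ t)) (hf : ∀ s ∈ Icc t₀ t, 0 ≤ f s)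
    (hineq : ∀ s ∈ Icc t₀ t, f s ≤ c + ∫ r in t₀..s, (a r * f r + b r * f r ^ q)) :
    bihariBound a b q c t₀ t ≤ (c + ∫ s in t₀..t, (a s * f s + b s * f s ^ q)) ^ (1 - q) := by
  have hφ : IntervalIntegrable (fun s ↦ a s * f s + b s * f s ^ q) volume t₀ t :=
    (intervalIntegrable_iff_integrableOn_Icc_of_le ht).2 <|
      (ha_int.mul_continuousOn hf_cont isCompact_Icc).add (hb_int.mul_continuousOn
        (hf_cont.rpow_const fun _ _ ↦ Or.inr (by linarith)) isCompact_Icc)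
  set R : ℝ → ℝ := fun x ↦ c + ∫ s in t₀..x, (a s * f s + b s * f s ^ q)
  have hR_pos : ∀ x ∈ Icc t₀ t, 0 < R x := fun x hx ↦
    lt_add_of_pos_of_le hc <| intervalIntegral.integral_nonneg hx.1 fun s hs ↦ by
      have hs' : s ∈ Icc t₀ t := ⟨hs.1, hs.2.trans hx.2⟩
      have := ha s hs'
      have := hb s hs'
      have := hf s hs'
      positivity
  have hR' : ∀ᵐ x, x ∈ Icc t₀ t → deriv R x ≤ a x * R x + b x * R x ^ q := by
    filter_upwards [hφ.ae_hasDerivAt_integral] with x hx hxI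
    rw [((hx (Icc_subset_uIcc hxI) t₀ left_mem_uIcc).const_add c).deriv]
    have hf_le := hineq x hxI
    have hf0 := hf x hxI
    gcongr
    · exact ha x hxI
    · exact hb x hxI
  simpa [R] using ((hφ.absolutelyContinuousOnInterval_intervalIntegral left_mem_uIcc).const_add
    c).bihariBound_le_rpow hq ht hR_pos
    ((intervalIntegrable_iff_integrableOn_Icc_of_le ht).2 ha_int)
    ((intervalIntegrable_iff_integrableOn_Icc_of_le ht).2 hb_int) hR'

theorem le_rpow_neg_inv_of_le_rpow_one_sub {x y q : ℝ} (hq : 1 < q) (hx : 0 ≤ x) (hy : 0 < y)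
    (h : y ≤ x ^ (1 - q)) : x ≤ y ^ (-(1 / (q - 1))) := calc
  x = (x ^ (1 - q)) ^ (-(1 / (q - 1))) := by
    rw [← rpow_mul hx, show (1 - q) * -(1 / (q - 1)) = 1 by
      field_simp [(by linarith : q - 1 ≠ 0)]; ring, rpow_one]
  _ ≤ y ^ (-(1 / (q - 1))) := rpow_le_rpow_of_nonpos hy h (by simp; linarith)

theorem nonlinear_gronwall_general (t₀ h q c : ℝ) (hq : 1 < q) (hc : 0 < c)
    (a b f : ℝ → ℝ)
    (ha_nonneg : ∀ t ∈ Set.Icc t₀ (t₀ + h), 0 ≤ a t)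
    (hb_nonneg : ∀ t ∈ Set.Icc t₀ (t₀ + h), 0 ≤ b t)
    (ha_int : IntegrableOn a (Set.Icc t₀ (t₀ + h)))
    (hb_int : IntegrableOn b (Set.Icc t₀ (t₀ + h)))
    (hf_cont : ContinuousOn f (Set.Icc t₀ (t₀ + h)))
    (hf_nonneg : ∀ t ∈ Set.Icc t₀ (t₀ + h), 0 ≤ f t)
    (hineq : ∀ t ∈ Set.Icc t₀ (t₀ + h),
      f t ≤ c + ∫ s in t₀..t, (a s * f s + b s * f s ^ q))
    (hsmall : c ^ (q - 1) * (q - 1) * (∫ s in t₀..(t₀ + h), b s)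
      < Real.exp ((1 - q) * ∫ s in t₀..(t₀ + h), a s)) :
    ∀ t ∈ Set.Icc t₀ (t₀ + h),
      0 < c ^ (1 - q) * Real.exp ((1 - q) * ∫ s in t₀..t, a s)
          - (q - 1) * ∫ s in t₀..t, b s * Real.exp ((1 - q) * ∫ r in s..t, a r) ∧
      f t ≤ (c ^ (1 - q) * Real.exp ((1 - q) * ∫ s in t₀..t, a s)
          - (q - 1) * ∫ s in t₀..t, b s * Real.exp ((1 - q) * ∫ r in s..t, a r))
            ^ (-(1 / (q - 1))) := by
  intro t ht
  have hT : t₀ ≤ t₀ + h := ht.1.trans ht.2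
  have hIcc : Icc t₀ t ⊆ Icc t₀ (t₀ + h) := Icc_subset_Icc_right ht.2
  have h_pos : 0 < bihariBound a b q c t₀ t :=
    bihariBound_pos hq.le hc ht ha_nonneg hb_nonneg
      ((intervalIntegrable_iff_integrableOn_Icc_of_le hT).2 ha_int)
      ((intervalIntegrable_iff_integrableOn_Icc_of_le hT).2 hb_int) hsmall
  have h_bihari := bihariBound_le_rpow_of_le_integral hq.le hc ht.1
    (fun s hs ↦ ha_nonneg s (hIcc hs)) (fun s hs ↦ hb_nonneg s (hIcc hs))
    (ha_int.mono_set hIcc) (hb_int.mono_set hIcc) (hf_cont.mono hIcc)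
    (fun s hs ↦ hf_nonneg s (hIcc hs)) (fun s hs ↦ hineq s (hIcc hs))
  refine ⟨h_pos, (hineq t ht).trans (le_rpow_neg_inv_of_le_rpow_one_sub hq ?_ h_pos h_bihari)⟩
  exact (hf_nonneg t ht).trans (hineq t ht)

/-- Nonlinear Gronwall (Bihari-type) lemma. -/
theorem nonlinear_gronwall (t₀ h q c : ℝ) (hh : 0 < h) (hq : 1 < q) (hc : 0 < c)
    (a b f : ℝ → ℝ)
    (ha_nonneg : ∀ t ∈ Set.Icc t₀ (t₀ + h), 0 ≤ a t)
    (hb_nonneg : ∀ t ∈ Set.Icc t₀ (t₀ + h), 0 ≤ b t)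
    (ha_int : IntegrableOn a (Set.Icc t₀ (t₀ + h)))
    (hb_int : IntegrableOn b (Set.Icc t₀ (t₀ + h)))
    (hf_cont : ContinuousOn f (Set.Icc t₀ (t₀ + h)))
    (hf_nonneg : ∀ t ∈ Set.Icc t₀ (t₀ + h), 0 ≤ f t)
    (hineq : ∀ t ∈ Set.Icc t₀ (t₀ + h),
      f t ≤ c + ∫ s in t₀..t, (a s * f s + b s * f s ^ q))
    (hsmall : c ^ (q - 1) * (q - 1) * (∫ s in t₀..(t₀ + h), b s)
      < Real.exp ((1 - q) * ∫ s in t₀..(t₀ + h), a s)) :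
    ∀ t ∈ Set.Icc t₀ (t₀ + h),
      0 < c ^ (1 - q) * Real.exp ((1 - q) * ∫ s in t₀..t, a s)
          - (q - 1) * ∫ s in t₀..t, b s * Real.exp ((1 - q) * ∫ r in s..t, a r) ∧
      f t ≤ (c ^ (1 - q) * Real.exp ((1 - q) * ∫ s in t₀..t, a s)
          - (q - 1) * ∫ s in t₀..t, b s * Real.exp ((1 - q) * ∫ r in s..t, a r))
            ^ (-(1 / (q - 1))) :=
  nonlinear_gronwall_general t₀ h q c hq hc a b f ha_nonneg hb_nonneg ha_int hb_int hf_cont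
    hf_nonneg hineq hsmall
end
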